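/- arXiv:1605.03313 — 3 statements merged into one kernel-verified Lean document; each statement's English description precedes it below -/
import Mathlib

section
/- Let Ω be a symmetric positive definite p×p matrix whose every row has at most K+1 nonzero entries and whose eigenvalues lie in [M⁻¹, M], and let Σ = Ω⁻¹. Then for every nonzero vector u ∈ ℝᵖ, ‖Σu‖_∞ / ‖u‖_∞ ≥ (K+1)^{-1/2} M⁻¹. -/
open Matrix

/-!
Since `Σ u = v` means `u = Ω v`, it suffices to bound the `ℓ∞ → ℓ∞` operator norm of `Ω`, i.e.
its largest absolute row sum. By Cauchy–Schwarz on the at most `K + 1` nonzero entries, a row sum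
is at most `√(K + 1)` times the Euclidean norm of the row, and that norm is at most `M`: the
squared row norm is a diagonal entry of `Ω²`, whose eigenvalues are the squares of those of `Ω`.
-/

attribute [local instance] Matrix.linftyOpNormedAddCommGroup

lemma Finset.sum_abs_le_sqrt_card_support_mul_sqrt_sum_sq {ι : Type*} [Fintype ι] (f : ι → ℝ) :
    ∑ j, |f j| ≤ √(Finset.univ.filter fun j => f j ≠ 0).card * √(∑ j, f j ^ 2) := by
  set s := Finset.univ.filter fun j => f j ≠ 0
  have hsupp : ∑ j, |f j| = ∑ j ∈ s, |f j| := by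
    simp only [s, Finset.sum_filter, ne_eq, ite_not]
    exact Finset.sum_congr rfl fun j _ => by split_ifs with h <;> simp [h]
  rw [hsupp, ← Real.sqrt_mul (Nat.cast_nonneg _)]
  apply Real.le_sqrt_of_sq_le
  calc (∑ j ∈ s, |f j|) ^ 2 ≤ s.card * ∑ j ∈ s, |f j| ^ 2 := sq_sum_le_card_mul_sum_sq
    _ ≤ s.card * ∑ j, f j ^ 2 := by
        gcongr
        simpa only [sq_abs] using Finset.sum_le_univ_sum_of_nonneg fun j => sq_nonneg (f j)

namespace Matrix

variable {m n : Type*} [Fintype m] [Fintype n]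

lemma linfty_opNorm_le_of_forall_sum_le {α : Type*} [NormedAddCommGroup α]
    {A : Matrix m n α} {C : ℝ} (hC : 0 ≤ C) (h : ∀ i, ∑ j, ‖A i j‖ ≤ C) : ‖A‖ ≤ C := by
  lift C to NNReal using hC
  rw [linfty_opNorm_def, NNReal.coe_le_coe]
  exact Finset.sup_le fun i _ => by simpa [← NNReal.coe_le_coe] using h i

lemma norm_le_linfty_opNorm_mul_norm_inv_mulVec [DecidableEq n] {A : Matrix n n ℝ}
    (hA : IsUnit A.det) (u : n → ℝ) : ‖u‖ ≤ ‖A‖ * ‖A⁻¹ *ᵥ u‖ :=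
  calc ‖u‖ = ‖A *ᵥ (A⁻¹ *ᵥ u)‖ := by rw [mulVec_mulVec, mul_nonsing_inv _ hA, one_mulVec]
    _ ≤ ‖A‖ * ‖A⁻¹ *ᵥ u‖ := linfty_opNorm_mulVec _ _

variable [DecidableEq n] {A : Matrix n n ℝ} {M : ℝ}

lemma IsHermitian.sum_sq_apply_le (hA : A.IsHermitian) (hM : ∀ k, |hA.eigenvalues k| ≤ M)
    (i : n) : ∑ j, A i j ^ 2 ≤ M ^ 2 := by
  set U : Matrix n n ℝ := (hA.eigenvectorUnitary : Matrix n n ℝ)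
  have hU : U * star U = 1 := mem_unitaryGroup_iff.mp hA.eigenvectorUnitary.2
  have hsq : A * A = U * diagonal (fun k => hA.eigenvalues k ^ 2) * star U := by
    conv_lhs => rw [hA.spectral_theorem, ← map_mul, diagonal_mul_diagonal]
    simp [U, sq]
  clear_value U
  have hrow : ∑ k, U i k ^ 2 = 1 := by
    simpa [mul_apply, sq] using congrFun₂ hU i i
  calc ∑ j, A i j ^ 2 = (A * A) i i := by
        simp only [mul_apply, sq]
        exact Finset.sum_congr rfl fun j _ => by rw [← hA.apply i j]; simp
    _ = ∑ k, hA.eigenvalues k ^ 2 * U i k ^ 2 := by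
        rw [hsq, mul_apply]
        refine Finset.sum_congr rfl fun k _ => ?_
        simp only [mul_diagonal, star_apply, star_trivial]
        ring
    _ ≤ ∑ k, M ^ 2 * U i k ^ 2 := by
        gcongr ∑ _k, ?_ * _ with k
        exact sq_le_sq' (abs_le.mp (hM k)).1 (abs_le.mp (hM k)).2
    _ = M ^ 2 := by rw [← Finset.mul_sum, hrow, mul_one]

lemma IsHermitian.linfty_opNorm_le_sqrt_mul (hA : A.IsHermitian) {s : ℕ} (hM₀ : 0 ≤ M)
    (hM : ∀ k, |hA.eigenvalues k| ≤ M)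
    (hs : ∀ i, (Finset.univ.filter fun j => A i j ≠ 0).card ≤ s) : ‖A‖ ≤ √s * M := by
  refine linfty_opNorm_le_of_forall_sum_le (by positivity) fun i => ?_
  calc ∑ j, ‖A i j‖ ≤ √(Finset.univ.filter fun j => A i j ≠ 0).card * √(∑ j, A i j ^ 2) :=
        Finset.sum_abs_le_sqrt_card_support_mul_sqrt_sum_sq (A i)
    _ ≤ √s * √(M ^ 2) := by
        gcongr
        · exact_mod_cast hs i
        · exact hA.sum_sq_apply_le hM i
    _ = √s * M := by rw [Real.sqrt_sq hM₀]

end Matrix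

theorem cone_invertibility_lower_bound_general {p K : ℕ} (M : ℝ) (hM : 1 ≤ M)
    (Ω : Matrix (Fin p) (Fin p) ℝ) (hΩ : Ω.PosDef)
    (hsparse : ∀ i, ((Finset.univ.filter fun j => Ω i j ≠ 0)).card ≤ K + 1)
    (heig : ∀ i, M⁻¹ ≤ hΩ.1.eigenvalues i ∧ hΩ.1.eigenvalues i ≤ M) :
    ∀ u : Fin p → ℝ, u ≠ 0 →
      (Real.sqrt (K + 1))⁻¹ * M⁻¹ ≤ ‖(Ω⁻¹).mulVec u‖ / ‖u‖ := by
  intro u hu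
  have hΩnorm : ‖Ω‖ ≤ √(K + 1) * M := by
    have habs k : |hΩ.1.eigenvalues k| ≤ M :=
      (abs_of_pos (hΩ.eigenvalues_pos k)).le.trans (heig k).2
    exact_mod_cast hΩ.1.linfty_opNorm_le_sqrt_mul (by linarith) habs hsparse
  rw [← mul_inv, le_div_iff₀ (norm_pos_iff.mpr hu), inv_mul_le_iff₀ (by positivity)]
  calc ‖u‖ ≤ ‖Ω‖ * ‖Ω⁻¹ *ᵥ u‖ :=
        norm_le_linfty_opNorm_mul_norm_inv_mulVec (isUnit_iff_ne_zero.mpr hΩ.det_pos.ne') u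
    _ ≤ √(K + 1) * M * ‖Ω⁻¹ *ᵥ u‖ := by gcongr

/-- Proposition 1: for Ω ∈ G(M, K) (symmetric positive definite, at most K+1 nonzero
entries per row, spectrum in [M⁻¹, M]) and Σ = Ω⁻¹, every nonzero u ∈ ℝᵖ satisfies
‖Σu‖_∞ / ‖u‖_∞ ≥ (K+1)^(-1/2) M⁻¹.  Here the norm on `Fin p → ℝ` is the sup norm. -/
theorem cone_invertibility_lower_bound {p K : ℕ} (hK : 0 < K) (M : ℝ) (hM : 1 ≤ M)
    (Ω : Matrix (Fin p) (Fin p) ℝ) (hΩ : Ω.PosDef)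
    (hsparse : ∀ i, ((Finset.univ.filter fun j => Ω i j ≠ 0)).card ≤ K + 1)
    (heig : ∀ i, M⁻¹ ≤ hΩ.1.eigenvalues i ∧ hΩ.1.eigenvalues i ≤ M) :
    ∀ u : Fin p → ℝ, u ≠ 0 →
      (Real.sqrt (K + 1))⁻¹ * M⁻¹ ≤ ‖(Ω⁻¹).mulVec u‖ / ‖u‖ :=
  cone_invertibility_lower_bound_general M hM Ω hΩ hsparse heig
end

section
/- Cross-validation risk comparison (deterministic core of Theorem 2b): let Ω̂¹ and Ω̂² be p×p matrices with ‖Ω̂ⁱ − Ω‖_∞ < c ω₀* for i = 1,2 and 0 < c ≤ 1/3, and suppose every nonzero entry of Ω has absolute value at least ω₀ ≥ ω₀*. Let τ₀ = ω₀ − c ω₀*. If for some τ ≥ τ₀ exactly M entries that are nonzero in T_{τ₀}(Ω̂¹) become zero in T_τ(Ω̂¹), then ‖T_τ(Ω̂¹) − Ω̂²‖_F² − ‖T_{τ₀}(Ω̂¹) − Ω̂²‖_F² ≥ M[(ω₀ − c ω₀*)² − (2c ω₀*)²] ≥ M(1 − 3c)(1 + c)(ω₀*)² ≥ 0. -/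
open Matrix
open scoped Classical

/-!
Raising the threshold from `τ₀ = ω₀ - c ω₀*` to `τ` only changes entries that survive at `τ₀`
and are killed at `τ`; every other term of the two Frobenius sums coincides. A surviving entry of
`Ω̂¹` is at least `τ₀ ≥ c ω₀*` in size, so it sits on a true nonzero entry of `Ω`, of size at
least `ω₀`. Killing it replaces the squared deviation `(Ω̂¹ - Ω̂²)² ≤ (2c ω₀*)²` by
`(Ω̂²)² ≥ (ω₀ - c ω₀*)²`. The final bounds are the factorisation
`((1 - c) ω₀*)² - (2c ω₀*)² = (1 - 3c)(1 + c) ω₀*²` together with `(1 - c) ω₀* ≤ ω₀ - c ω₀*`.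
-/

noncomputable def hardThreshold (t x : ℝ) : ℝ := if t ≤ |x| then x else 0

section hardThreshold

variable {t t₀ x : ℝ}

lemma le_abs_of_hardThreshold_ne_zero (h : hardThreshold t x ≠ 0) : t ≤ |x| := by
  by_contra hlt
  exact h (if_neg hlt)

lemma hardThreshold_eq_self_of_ne_zero (h : hardThreshold t x ≠ 0) : hardThreshold t x = x :=
  if_pos (le_abs_of_hardThreshold_ne_zero h)

lemma hardThreshold_eq_of_le_of_not_killed (hle : t₀ ≤ t)
    (h : ¬(hardThreshold t₀ x ≠ 0 ∧ hardThreshold t x = 0)) :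
    hardThreshold t x = hardThreshold t₀ x := by
  grind [hardThreshold]

end hardThreshold

lemma card_nsmul_le_sum_sub_sum {ι M : Type*} [Fintype ι] [AddCommGroup M] [PartialOrder M]
    [IsOrderedAddMonoid M] (s : Finset ι) (f g : ι → M) (a : M)
    (hs : ∀ i ∈ s, a ≤ f i - g i) (hsc : ∀ i ∉ s, f i = g i) :
    s.card • a ≤ ∑ i, f i - ∑ i, g i := by
  rw [← Finset.sum_sub_distrib,
    ← Finset.sum_subset (Finset.subset_univ s) fun i _ hi => sub_eq_zero.mpr (hsc i hi)]
  exact Finset.card_nsmul_le_sum s _ a hs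

lemma sq_sub_sq_le_of_killed_entry {w x y e ω₀ : ℝ} (hx : |x - w| < e) (hy : |y - w| < e)
    (hmin : w ≠ 0 → ω₀ ≤ |w|) (he : 2 * e ≤ ω₀) (hkill : ω₀ - e ≤ |x|) :
    (ω₀ - e) ^ 2 - (2 * e) ^ 2 ≤ y ^ 2 - (x - y) ^ 2 := by
  have he₀ : 0 ≤ e := (abs_nonneg _).trans hx.le
  have hw : ω₀ ≤ |w| := hmin fun hw₀ => by
    rw [hw₀, sub_zero] at hx
    linarith
  have hy_large : ω₀ - e ≤ |y| := by
    have := abs_sub_abs_le_abs_sub w y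
    rw [abs_sub_comm] at this
    linarith
  have hxy : |x - y| ≤ 2 * e :=
    calc |x - y| = |(x - w) - (y - w)| := by ring_nf
      _ ≤ |x - w| + |y - w| := abs_sub _ _
      _ ≤ 2 * e := by linarith
  have hy_sq : (ω₀ - e) ^ 2 ≤ y ^ 2 :=
    sq_le_sq.mpr (by rwa [abs_of_nonneg (by linarith : 0 ≤ ω₀ - e)])
  have hxy_sq : (x - y) ^ 2 ≤ (2 * e) ^ 2 :=
    sq_le_sq.mpr (by rwa [abs_of_nonneg (by linarith : 0 ≤ 2 * e)])
  linarith

lemma sq_mul_sub_sq_le {c ω₀s ω₀ : ℝ} (hc : c ≤ 1) (hω₀s : 0 ≤ ω₀s) (hωω : ω₀s ≤ ω₀) :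
    (1 - 3 * c) * (1 + c) * ω₀s ^ 2 ≤ (ω₀ - c * ω₀s) ^ 2 - (2 * c * ω₀s) ^ 2 := by
  have hsq : ((1 - c) * ω₀s) ^ 2 ≤ (ω₀ - c * ω₀s) ^ 2 :=
    pow_le_pow_left₀ (mul_nonneg (by linarith) hω₀s) (by linarith) 2
  linarith [show (1 - 3 * c) * (1 + c) * ω₀s ^ 2 = ((1 - c) * ω₀s) ^ 2 - (2 * c * ω₀s) ^ 2 by ring]

/-- Cross-validation risk comparison (deterministic core of Theorem 2b): with Ω̂¹, Ω̂²
entrywise within c·ω₀* of Ω (0 < c ≤ 1/3), minimal nonzero magnitude ω₀ ≥ ω₀* > 0,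
τ₀ = ω₀ − c·ω₀*, and τ ≥ τ₀, if exactly M entries nonzero in T_{τ₀}(Ω̂¹) become zero in
T_τ(Ω̂¹), then the increase in squared Frobenius distance to Ω̂² is at least
M[(ω₀ − cω₀*)² − (2cω₀*)²] ≥ M(1 − 3c)(1 + c)(ω₀*)² ≥ 0. -/
theorem cv_risk_comparison {p : ℕ} (Ω Ωh1 Ωh2 : Matrix (Fin p) (Fin p) ℝ)
    (c ω₀s ω₀ τ : ℝ) (hc0 : 0 < c) (hc : c ≤ 1 / 3) (hω₀s : 0 < ω₀s)
    (herr1 : ∀ j k, |Ωh1 j k - Ω j k| < c * ω₀s)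
    (herr2 : ∀ j k, |Ωh2 j k - Ω j k| < c * ω₀s)
    (hmin : ∀ j k, Ω j k ≠ 0 → ω₀ ≤ |Ω j k|)
    (hωω : ω₀s ≤ ω₀)
    (hτ : ω₀ - c * ω₀s ≤ τ)
    (T : ℝ → Matrix (Fin p) (Fin p) ℝ)
    (hT : ∀ t j k, T t j k = if t ≤ |Ωh1 j k| then Ωh1 j k else 0)
    (M : ℕ)
    (hM : M = (Finset.univ.filter fun jk : Fin p × Fin p =>
        T (ω₀ - c * ω₀s) jk.1 jk.2 ≠ 0 ∧ T τ jk.1 jk.2 = 0).card) :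
    (M : ℝ) * ((ω₀ - c * ω₀s) ^ 2 - (2 * c * ω₀s) ^ 2) ≤
        (∑ j, ∑ k, (T τ j k - Ωh2 j k) ^ 2) -
          (∑ j, ∑ k, (T (ω₀ - c * ω₀s) j k - Ωh2 j k) ^ 2) ∧
      (M : ℝ) * (1 - 3 * c) * (1 + c) * ω₀s ^ 2 ≤
        (M : ℝ) * ((ω₀ - c * ω₀s) ^ 2 - (2 * c * ω₀s) ^ 2) ∧
      0 ≤ (M : ℝ) * (1 - 3 * c) * (1 + c) * ω₀s ^ 2 := by
  have hT' : ∀ t j k, T t j k = hardThreshold t (Ωh1 j k) := hT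
  have hgap : 2 * (c * ω₀s) ≤ ω₀ := by nlinarith
  have hM₀ : (0 : ℝ) ≤ M := M.cast_nonneg
  refine ⟨?_, ?_, ?_⟩
  · rw [hM, ← nsmul_eq_mul, ← Fintype.sum_prod_type', ← Fintype.sum_prod_type']
    refine card_nsmul_le_sum_sub_sum _ _ _ _ (fun ⟨j, k⟩ hjk => ?_) (fun ⟨j, k⟩ hjk => ?_)
    · obtain ⟨hsurvive, hdie⟩ := (Finset.mem_filter.mp hjk).2
      rw [hT'] at hsurvive hdie
      rw [hT', hT', hdie, hardThreshold_eq_self_of_ne_zero hsurvive, zero_sub, neg_sq,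
        mul_assoc]
      exact sq_sub_sq_le_of_killed_entry (herr1 j k) (herr2 j k) (hmin j k) hgap
        (le_abs_of_hardThreshold_ne_zero hsurvive)
    · simp only [Finset.mem_filter, Finset.mem_univ, true_and, hT'] at hjk
      rw [hT', hT', hardThreshold_eq_of_le_of_not_killed hτ hjk]
  · rw [mul_assoc, mul_assoc, ← mul_assoc (1 - 3 * c)]
    exact mul_le_mul_of_nonneg_left (sq_mul_sub_sq_le (by linarith) hω₀s.le hωω) hM₀
  · have : 0 ≤ 1 - 3 * c := by linarith
    positivity
end

section
/- Markowitz optimal portfolio formula: let Ω be a symmetric positive definite p×p matrix, μ ∈ ℝᵖ, 1 the all-ones vector, and γ ∈ ℝ. Set d₁ = μᵀΩμ, d₂ = 1ᵀΩμ, d₃ = 1ᵀΩ1, and assume d₃d₁ − d₂² ≠ 0. Then ξ_opt = [(d₁ − γd₂)/(d₃d₁ − d₂²)]·Ω1 + [(γd₃ − d₂)/(d₃d₁ − d₂²)]·Ωμ satisfies the constraints ξ_optᵀ1 = 1 and ξ_optᵀμ = γ, and for every ξ ∈ ℝᵖ with ξᵀ1 = 1 and ξᵀμ = γ we have ξᵀΩ⁻¹ξ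 ≥ ξ_optᵀΩ⁻¹ξ_opt. -/
open Matrix

/-- Markowitz optimal portfolio: with Ω symmetric positive definite, d₁ = μᵀΩμ,
d₂ = 1ᵀΩμ, d₃ = 1ᵀΩ1 and d₃d₁ − d₂² ≠ 0, the portfolio
ξ_opt = [(d₁ − γd₂)/(d₃d₁ − d₂²)]·Ω1 + [(γd₃ − d₂)/(d₃d₁ − d₂²)]·Ωμ satisfies the two
linear constraints and minimizes ξᵀΩ⁻¹ξ among all ξ with ξᵀ1 = 1 and ξᵀμ = γ. -/
theorem markowitz_optimal_portfolio {p : ℕ} (Ω : Matrix (Fin p) (Fin p) ℝ)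
    (hΩ : Ω.PosDef) (μ : Fin p → ℝ) (γ : ℝ)
    (ones : Fin p → ℝ) (hones : ones = fun _ => 1)
    (d₁ d₂ d₃ : ℝ)
    (hd₁ : d₁ = μ ⬝ᵥ Ω.mulVec μ) (hd₂ : d₂ = ones ⬝ᵥ Ω.mulVec μ)
    (hd₃ : d₃ = ones ⬝ᵥ Ω.mulVec ones)
    (hdet : d₃ * d₁ - d₂ ^ 2 ≠ 0)
    (ξopt : Fin p → ℝ)
    (hξ : ξopt = ((d₁ - γ * d₂) / (d₃ * d₁ - d₂ ^ 2)) • Ω.mulVec ones +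
        ((γ * d₃ - d₂) / (d₃ * d₁ - d₂ ^ 2)) • Ω.mulVec μ) :
    ξopt ⬝ᵥ ones = 1 ∧ ξopt ⬝ᵥ μ = γ ∧
      ∀ ξ : Fin p → ℝ, ξ ⬝ᵥ ones = 1 → ξ ⬝ᵥ μ = γ →
        ξopt ⬝ᵥ (Ω⁻¹).mulVec ξopt ≤ ξ ⬝ᵥ (Ω⁻¹).mulVec ξ := by
  have hsymm : Ωᵀ = Ω := hΩ.isHermitian.eq
  have hsym : ∀ v w : Fin p → ℝ, v ⬝ᵥ Ω.mulVec w = w ⬝ᵥ Ω.mulVec v := by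
    intro v w
    rw [Matrix.dotProduct_mulVec, ← hsymm, Matrix.vecMul_transpose, dotProduct_comm, hsymm]
  set a := (d₁ - γ * d₂) / (d₃ * d₁ - d₂ ^ 2) with ha
  set b := (γ * d₃ - d₂) / (d₃ * d₁ - d₂ ^ 2) with hb
  have expand : ∀ v : Fin p → ℝ, ξopt ⬝ᵥ v = a * (v ⬝ᵥ Ω.mulVec ones) + b * (v ⬝ᵥ Ω.mulVec μ) := by
    intro v
    rw [hξ, add_dotProduct, smul_dotProduct, smul_dotProduct, dotProduct_comm _ v,
      dotProduct_comm _ v]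
    simp [smul_eq_mul]
  have c1 : ξopt ⬝ᵥ ones = 1 := by
    rw [expand, ← hd₃, ← hd₂, ha, hb]
    rw [div_mul_eq_mul_div, div_mul_eq_mul_div, ← add_div, div_eq_iff hdet]
    ring
  have c2 : ξopt ⬝ᵥ μ = γ := by
    rw [expand, hsym μ ones, ← hd₂, ← hd₁, ha, hb]
    rw [div_mul_eq_mul_div, div_mul_eq_mul_div, ← add_div, div_eq_iff hdet]
    ring
  refine ⟨c1, c2, ?_⟩
  intro ξ h1 h2
  have hinv : Ω⁻¹.PosDef := hΩ.inv
  have hU := hΩ.isUnit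
  have hiv : ∀ v : Fin p → ℝ, Ω⁻¹.mulVec (Ω.mulVec v) = v := by
    intro v
    rw [Matrix.mulVec_mulVec, Matrix.nonsing_inv_mul _ (isUnit_iff_isUnit_det _ |>.1 hU), one_mulVec]
  have hio : Ω⁻¹.mulVec ξopt = a • ones + b • μ := by
    rw [hξ, Matrix.mulVec_add, Matrix.mulVec_smul, Matrix.mulVec_smul, hiv, hiv]
  have hsym' : ∀ v w : Fin p → ℝ, v ⬝ᵥ Ω⁻¹.mulVec w = w ⬝ᵥ Ω⁻¹.mulVec v := by
    intro v w
    have hsymm2 : Ω⁻¹ᵀ = Ω⁻¹ := hinv.isHermitian.eq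
    rw [Matrix.dotProduct_mulVec, ← hsymm2, Matrix.vecMul_transpose, dotProduct_comm, hsymm2]
  set η := ξ - ξopt with hη
  have hz : η ⬝ᵥ Ω⁻¹.mulVec ξopt = 0 := by
    rw [hio]
    have e1 : η ⬝ᵥ ones = 0 := by rw [hη, sub_dotProduct, h1, c1]; ring
    have e2 : η ⬝ᵥ μ = 0 := by rw [hη, sub_dotProduct, h2, c2]; ring
    rw [dotProduct_add, dotProduct_smul, dotProduct_smul, e1, e2]; simp
  have hnn : 0 ≤ η ⬝ᵥ Ω⁻¹.mulVec η := by
    have := hinv.posSemidef.re_dotProduct_nonneg η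
    simpa using this
  have key : ξ ⬝ᵥ Ω⁻¹.mulVec ξ = ξopt ⬝ᵥ Ω⁻¹.mulVec ξopt + η ⬝ᵥ Ω⁻¹.mulVec η := by
    have hξeq : ξ = ξopt + η := by rw [hη, add_sub_cancel]
    rw [hξeq, Matrix.mulVec_add, dotProduct_add, add_dotProduct, add_dotProduct,
      hsym' ξopt η, hz]
    ring
  linarith
end
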